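/- arXiv:1212.1873 — 3 statements merged into one kernel-verified Lean document; each statement's English description precedes it below -/
import Mathlib

section
/- Let X₀, Z₁, Z₂, … be independent random variables taking values in a countable abelian group, with the Zₙ identically distributed, all with finite entropy, and let Xₙ = X₀ + Z₁ + ⋯ + Zₙ. Then the conditional entropy H(Z₁ | Xₙ) is non-decreasing in n. -/
/-!
Write `S = Z_{m+1} + ⋯ + Z_n`, so that `X_n = X_m + S` with `S` independent of `(Z₁, X_m)`.
Independence gives `H(Z₁ | X_m) = H(Z₁ | X_m, S)`, and since `X_n` is a function of `(X_m, S)`,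
conditioning on it instead can only increase the entropy: `H(Z₁ | X_m, S) ≤ H(Z₁ | X_n)`. This
data-processing step is the log-sum inequality applied on each fibre of the function. By
subadditivity every `X_n` has finite entropy, so all quantities are finite and the inequality
transfers to the real differences `H(Z₁, X_n) - H(X_n) = H(Z₁ | X_n)`.
-/

open MeasureTheory ProbabilityTheory

/-- Shannon entropy of a discrete random variable `X` on `(Ω, μ)`. -/
noncomputable def rvEntropy {Ω Γ : Type*} [MeasurableSpace Ω] (μ : Measure Ω)
    (X : Ω → Γ) : ℝ :=
  ∑' g : Γ, Real.negMulLog (μ (X ⁻¹' {g})).toReal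

open Real
open scoped ENNReal

namespace Real

/-- `log x ≤ x - 1` at `x = b A / (a B)`. Summed over a family with `∑ a = A`, `∑ b = B`, the
right-hand side adds up to `A * log (B / A)`. -/
lemma mul_log_div_le_tangent {a b A B : ℝ} (ha : 0 ≤ a) (hab : a ≤ b) (hA : 0 < A)
    (hB : 0 < B) : a * log (b / a) ≤ b * (A / B) - a + a * log (B / A) := by
  rcases ha.eq_or_lt with rfl | ha
  · simp only [zero_mul, sub_zero]; positivity
  have hb : 0 < b := ha.trans_le hab
  have hlog : log (b / a) - log (B / A) = log (b * A / (a * B)) := by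
    rw [← log_div (by positivity) (by positivity)]
    congr 1
    field_simp
  have htangent := log_le_sub_one_of_pos (show 0 < b * A / (a * B) by positivity)
  have hmul : a * (log (b / a) - log (B / A)) ≤ a * (b * A / (a * B) - 1) := by
    rw [hlog]; exact mul_le_mul_of_nonneg_left htangent ha.le
  have hrhs : a * (b * A / (a * B) - 1) = b * (A / B) - a := by field_simp
  linarith

lemma mul_log_div_nonneg {a b : ℝ} (ha : 0 ≤ a) (hab : a ≤ b) : 0 ≤ a * log (b / a) := by
  rcases ha.eq_or_lt with rfl | ha
  · simp
  · exact mul_nonneg ha.le (log_nonneg ((one_le_div ha).mpr hab))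

/-- The log-sum inequality, stated in `ℝ≥0∞` so that the left-hand side needs no summability. -/
lemma tsum_ofReal_mul_log_div_le {ι : Type*} {a b : ι → ℝ} (ha : ∀ i, 0 ≤ a i)
    (hab : ∀ i, a i ≤ b i) (hb : Summable b) :
    ∑' i, ENNReal.ofReal (a i * log (b i / a i))
      ≤ ENNReal.ofReal ((∑' i, a i) * log ((∑' i, b i) / ∑' i, a i)) := by
  have hsa : Summable a := hb.of_nonneg_of_le ha hab
  set A := ∑' i, a i
  set B := ∑' i, b i
  rcases (tsum_nonneg ha).eq_or_lt with hA | hA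
  · have : ∀ i, a i = 0 := fun i => le_antisymm (hA ▸ hsa.le_tsum i fun j _ => ha j) (ha i)
    simp [this]
  have hB : 0 < B := hA.trans_le (hsa.tsum_le_tsum hab hb)
  set c : ι → ℝ := fun i => b i * (A / B) - a i + a i * log (B / A)
  have hle : ∀ i, a i * log (b i / a i) ≤ c i := fun i =>
    mul_log_div_le_tangent (ha i) (hab i) hA hB
  have hc : HasSum c (A * log (B / A)) := by
    have := ((hb.hasSum.mul_right (A / B)).sub hsa.hasSum).add
      (hsa.hasSum.mul_right (log (B / A)))
    rwa [mul_div_cancel₀ A hB.ne', sub_self, zero_add] at this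
  calc ∑' i, ENNReal.ofReal (a i * log (b i / a i))
      ≤ ∑' i, ENNReal.ofReal (c i) :=
        ENNReal.tsum_le_tsum fun i => ENNReal.ofReal_le_ofReal (hle i)
    _ = ENNReal.ofReal (A * log (B / A)) := by
        rw [← hc.tsum_eq, ENNReal.ofReal_tsum_of_nonneg _ hc.summable]
        exact fun i => (mul_log_div_nonneg (ha i) (hab i)).trans (hle i)

lemma mul_neg_log_le_negMulLog {p q : ℝ} (hp : 0 ≤ p) (hpq : p ≤ q) :
    p * -log q ≤ negMulLog p := by
  rcases hp.eq_or_lt with rfl | hp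
  · simp
  · rw [negMulLog, neg_mul_comm]
    exact mul_le_mul_of_nonneg_left (neg_le_neg (log_le_log hp hpq)) hp.le

lemma ofReal_negMulLog_eq_add {x y : ℝ} (hx : 0 ≤ x) (hxy : x ≤ y) (hy : y ≤ 1) :
    ENNReal.ofReal (negMulLog x)
      = ENNReal.ofReal (x * log (y / x)) + ENNReal.ofReal (x * -log y) := by
  rcases hx.eq_or_lt with rfl | hx
  · simp
  have hy0 : 0 < y := hx.trans_le hxy
  rw [← ENNReal.ofReal_add (mul_log_div_nonneg hx.le hxy)
    (mul_nonneg hx.le (neg_nonneg.mpr (log_nonpos hy0.le hy))), log_div hy0.ne' hx.ne', negMulLog]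
  ring_nf

lemma mul_mul_log_div_mul_mul (a b c : ℝ) :
    a * c * log (b * c / (a * c)) = c * (a * log (b / a)) := by
  rcases eq_or_ne c 0 with rfl | hc
  · simp
  · rw [mul_div_mul_right _ _ hc]; ring

end Real

lemma add_sum_Icc_eq_sum_range {M : Type*} [AddCommMonoid M] (x : M) (z : ℕ → M) (k : ℕ) :
    x + ∑ i ∈ Finset.Icc 1 k, z i = ∑ i ∈ Finset.range (k + 1), if i = 0 then x else z i := by
  rw [Finset.range_eq_Ico, Finset.sum_eq_sum_Ico_succ_bot k.succ_pos, if_pos rfl, zero_add,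
    Nat.succ_eq_add_one, Finset.Ico_add_one_right_eq_Icc]
  congr 1
  exact Finset.sum_congr rfl fun i hi => by rw [if_neg (by simp at hi; omega)]

lemma ProbabilityTheory.iIndepFun.indepFun_prodMk_finset_sum {Ω α ι : Type*} [MeasurableSpace Ω]
    {μ : Measure Ω} [MeasurableSpace α] [AddCommMonoid α] [MeasurableAdd₂ α] {f : ι → Ω → α}
    (h : iIndepFun f μ) (hf : ∀ i, Measurable (f i)) {S T : Finset ι} (hST : Disjoint S T)
    {j : ι} (hj : j ∈ S) :
    IndepFun (fun ω => (f j ω, ∑ i ∈ S, f i ω)) (fun ω => ∑ i ∈ T, f i ω) μ := by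
  have hsum : ∀ R : Finset ι, Measurable fun v : R → α => ∑ i, v i := fun R =>
    Finset.measurable_sum _ fun i _ => measurable_pi_apply i
  have := (h.indepFun_finset S T hST hf).comp (φ := fun v => (v ⟨j, hj⟩, ∑ i, v i))
    (ψ := fun v => ∑ i, v i) ((measurable_pi_apply _).prodMk (hsum S)) (hsum T)
  convert this using 1 <;> funext ω <;>
    simp only [Function.comp_apply, Finset.sum_coe_sort S fun i => f i ω,
      Finset.sum_coe_sort T fun i => f i ω]

namespace DiscreteEntropy

lemma preimage_pair_singleton {Ω α β : Type*} (U : Ω → α) (V : Ω → β) (u : α) (v : β) :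
    (fun ω => (U ω, V ω)) ⁻¹' {(u, v)} = U ⁻¹' {u} ∩ V ⁻¹' {v} := by
  rw [← Set.singleton_prod_singleton, Set.mk_preimage_prod]

variable {Ω α β γ : Type*} [MeasurableSpace Ω] {μ : Measure Ω}

/-- Valued in `ℝ≥0∞` (all terms are nonnegative), so that identities such as the chain rule
`entropy_pair` need no summability hypotheses. -/
noncomputable def entropy (μ : Measure Ω) (X : Ω → α) : ℝ≥0∞ :=
  ∑' a, ENNReal.ofReal (negMulLog (μ.real (X ⁻¹' {a})))

noncomputable def condEntropy (μ : Measure Ω) (U : Ω → α) (V : Ω → β) : ℝ≥0∞ :=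
  ∑' p : α × β, ENNReal.ofReal (μ.real ((fun ω => (U ω, V ω)) ⁻¹' {p}) *
    log (μ.real (V ⁻¹' {p.2}) / μ.real ((fun ω => (U ω, V ω)) ⁻¹' {p})))

noncomputable def logRatioSum (ν μ : Measure Ω) (V : Ω → β) : ℝ≥0∞ :=
  ∑' v, ENNReal.ofReal (ν.real (V ⁻¹' {v}) * log (μ.real (V ⁻¹' {v}) / ν.real (V ⁻¹' {v})))

lemma ofReal_measureReal_mul [IsFiniteMeasure μ] (s : Set Ω) (r : ℝ) :
    ENNReal.ofReal (μ.real s * r) = μ s * ENNReal.ofReal r := by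
  rw [ENNReal.ofReal_mul measureReal_nonneg, ofReal_measureReal]

lemma toReal_entropy [IsProbabilityMeasure μ] (X : Ω → α) :
    (entropy μ X).toReal = rvEntropy μ X := by
  rw [entropy, ENNReal.tsum_toReal_eq fun _ => ENNReal.ofReal_ne_top]
  exact tsum_congr fun a =>
    ENNReal.toReal_ofReal (negMulLog_nonneg measureReal_nonneg measureReal_le_one)

lemma entropy_ne_top_of_summable [IsProbabilityMeasure μ] {X : Ω → α}
    (h : Summable fun a => negMulLog (μ.real (X ⁻¹' {a}))) : entropy μ X ≠ ⊤ := by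
  rw [entropy, ← ENNReal.ofReal_tsum_of_nonneg
    (fun _ => negMulLog_nonneg measureReal_nonneg measureReal_le_one) h]
  exact ENNReal.ofReal_ne_top

lemma entropy_const [IsProbabilityMeasure μ] (c : α) : entropy μ (fun _ => c) = 0 :=
  ENNReal.tsum_eq_zero.mpr fun a => by by_cases h : c = a <;> simp [h]

lemma ofReal_negMulLog_measureReal [IsFiniteMeasure μ] (s : Set Ω) :
    ENNReal.ofReal (negMulLog (μ.real s)) = μ s * ENNReal.ofReal (-log (μ.real s)) := by
  rw [← ofReal_measureReal_mul, negMulLog, neg_mul_comm]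

lemma entropy_eq_of_map_eq [MeasurableSpace α] [MeasurableSingletonClass α] {X Y : Ω → α}
    (hX : Measurable X) (hY : Measurable Y) (h : μ.map X = μ.map Y) :
    entropy μ X = entropy μ Y := by
  simp only [entropy, ← map_measureReal_apply hX (measurableSet_singleton _), h,
    map_measureReal_apply hY (measurableSet_singleton _)]

lemma measureReal_preimage_pair_of_indepFun [MeasurableSpace α] [MeasurableSingletonClass α]
    [MeasurableSpace β] [MeasurableSingletonClass β] {X : Ω → α} {Y : Ω → β}
    (h : IndepFun X Y μ) (x : α) (y : β) :
    μ.real ((fun ω => (X ω, Y ω)) ⁻¹' {(x, y)}) = μ.real (X ⁻¹' {x}) * μ.real (Y ⁻¹' {y}) := by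
  rw [preimage_pair_singleton, measureReal_def, h.measure_inter_preimage_eq_mul _ _
    (measurableSet_singleton x) (measurableSet_singleton y), ENNReal.toReal_mul]
  rfl

lemma condEntropy_eq_tsum_logRatioSum [MeasurableSpace α] [MeasurableSingletonClass α]
    {U : Ω → α} {V : Ω → β} (hU : Measurable U) :
    condEntropy μ U V = ∑' u, logRatioSum (μ.restrict (U ⁻¹' {u})) μ V := by
  rw [condEntropy, ENNReal.tsum_prod']
  simp_rw [logRatioSum, measureReal_restrict_apply' (hU (measurableSet_singleton _)),
    preimage_pair_singleton, Set.inter_comm]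

section Countable

variable [MeasurableSpace α] [MeasurableSingletonClass α] [Countable α]

lemma tsum_measure_preimage_singleton_eq_univ {X : Ω → α} (hX : Measurable X) :
    ∑' a, μ (X ⁻¹' {a}) = μ Set.univ := by
  rw [← tsum_univ, tsum_measure_preimage_singleton Set.countable_univ
    fun a _ => hX (measurableSet_singleton a), Set.preimage_univ]

lemma tsum_measure_fiber {X : Ω → α} (hX : Measurable X) (f : α → β) (b : β) :
    ∑' a : f ⁻¹' {b}, μ (X ⁻¹' {(a : α)}) = μ ((fun ω => f (X ω)) ⁻¹' {b}) :=
  tsum_measure_preimage_singleton (Set.to_countable _) fun a _ => hX (measurableSet_singleton a)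

lemma summable_measureReal_preimage_singleton [IsFiniteMeasure μ] {X : Ω → α}
    (hX : Measurable X) : Summable fun a => μ.real (X ⁻¹' {a}) :=
  ENNReal.summable_toReal (by rw [tsum_measure_preimage_singleton_eq_univ hX]; finiteness)

lemma tsum_measureReal_fiber [IsFiniteMeasure μ] {X : Ω → α} (hX : Measurable X)
    (f : α → β) (b : β) :
    ∑' a : f ⁻¹' {b}, μ.real (X ⁻¹' {(a : α)}) = μ.real ((fun ω => f (X ω)) ⁻¹' {b}) := by
  rw [measureReal_def, ← tsum_measure_fiber hX f b,
    ENNReal.tsum_toReal_eq fun _ => measure_ne_top μ _]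
  rfl

lemma tsum_measure_preimage_pair_left [MeasurableSpace β] [MeasurableSingletonClass β]
    {U : Ω → α} {V : Ω → β} (hU : Measurable U) (hV : Measurable V) (v : β) :
    ∑' u, μ ((fun ω => (U ω, V ω)) ⁻¹' {(u, v)}) = μ (V ⁻¹' {v}) := by
  simp_rw [preimage_pair_singleton, ← Measure.restrict_apply' (hV (measurableSet_singleton v)),
    tsum_measure_preimage_singleton_eq_univ hU, Measure.restrict_apply_univ]

lemma entropy_comp_le [IsFiniteMeasure μ] {X : Ω → α} (hX : Measurable X) (f : α → β) :
    entropy μ (fun ω => f (X ω)) ≤ entropy μ X := by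
  rw [entropy, entropy, ← ENNReal.tsum_fiberwise _ f]
  refine ENNReal.tsum_le_tsum fun b => ?_
  set q := μ.real ((fun ω => f (X ω)) ⁻¹' {b})
  have hsub : ∀ a : f ⁻¹' {b}, X ⁻¹' {(a : α)} ⊆ (fun ω => f (X ω)) ⁻¹' {b} := by
    intro a ω hω
    simp only [Set.mem_preimage, Set.mem_singleton_iff] at hω ⊢
    rw [hω]
    exact a.2
  calc ENNReal.ofReal (negMulLog q)
      = ∑' a : f ⁻¹' {b}, ENNReal.ofReal (μ.real (X ⁻¹' {(a : α)}) * -log q) := by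
        simp_rw [ofReal_measureReal_mul]
        rw [ENNReal.tsum_mul_right, tsum_measure_fiber hX, ofReal_negMulLog_measureReal]
    _ ≤ _ := ENNReal.tsum_le_tsum fun a => ENNReal.ofReal_le_ofReal <|
        mul_neg_log_le_negMulLog measureReal_nonneg (measureReal_mono (hsub a))

lemma entropy_pair [IsProbabilityMeasure μ] [MeasurableSpace β] [MeasurableSingletonClass β]
    {U : Ω → α} {V : Ω → β} (hU : Measurable U) (hV : Measurable V) :
    entropy μ (fun ω => (U ω, V ω)) = condEntropy μ U V + entropy μ V := by
  have hsplit : ∀ p : α × β, ENNReal.ofReal (negMulLog (μ.real ((fun ω => (U ω, V ω)) ⁻¹' {p})))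
      = ENNReal.ofReal (μ.real ((fun ω => (U ω, V ω)) ⁻¹' {p}) *
          log (μ.real (V ⁻¹' {p.2}) / μ.real ((fun ω => (U ω, V ω)) ⁻¹' {p})))
        + μ ((fun ω => (U ω, V ω)) ⁻¹' {p}) * ENNReal.ofReal (-log (μ.real (V ⁻¹' {p.2}))) :=
    fun ⟨u, v⟩ => by
      have hsub : (fun ω => (U ω, V ω)) ⁻¹' {(u, v)} ⊆ V ⁻¹' {v} := by
        rw [preimage_pair_singleton]; exact Set.inter_subset_right
      rw [ofReal_negMulLog_eq_add measureReal_nonneg (measureReal_mono hsub) measureReal_le_one,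
        ← ofReal_measureReal_mul]
  rw [entropy, tsum_congr hsplit, ENNReal.tsum_add]
  congr 1
  rw [ENNReal.tsum_prod', ENNReal.tsum_comm]
  simp_rw [ENNReal.tsum_mul_right, tsum_measure_preimage_pair_left hU hV, entropy,
    ofReal_negMulLog_measureReal]

lemma logRatioSum_comp_le {ν : Measure Ω} [IsFiniteMeasure μ] (hνμ : ν ≤ μ) {V : Ω → α}
    (hV : Measurable V) (f : α → β) :
    logRatioSum ν μ V ≤ logRatioSum ν μ (fun ω => f (V ω)) := by
  have : IsFiniteMeasure ν := isFiniteMeasure_of_le μ hνμ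
  rw [logRatioSum, logRatioSum, ← ENNReal.tsum_fiberwise _ f]
  refine ENNReal.tsum_le_tsum fun b => ?_
  rw [← tsum_measureReal_fiber (μ := ν) hV f b, ← tsum_measureReal_fiber (μ := μ) hV f b]
  exact tsum_ofReal_mul_log_div_le (fun _ => measureReal_nonneg)
    (fun _ => ENNReal.toReal_mono (measure_ne_top μ _) (hνμ _))
    ((summable_measureReal_preimage_singleton hV).subtype _)

lemma condEntropy_le_condEntropy_comp [IsFiniteMeasure μ] [MeasurableSpace β]
    [MeasurableSingletonClass β] {U : Ω → β} {V : Ω → α} (hU : Measurable U) (hV : Measurable V)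
    (f : α → γ) : condEntropy μ U V ≤ condEntropy μ U (fun ω => f (V ω)) := by
  rw [condEntropy_eq_tsum_logRatioSum hU, condEntropy_eq_tsum_logRatioSum hU]
  exact ENNReal.tsum_le_tsum fun u => logRatioSum_comp_le Measure.restrict_le_self hV f

lemma condEntropy_le_entropy [IsProbabilityMeasure μ] [MeasurableSpace β]
    [MeasurableSingletonClass β] {U : Ω → β} {V : Ω → α} (hU : Measurable U) (hV : Measurable V) :
    condEntropy μ U V ≤ entropy μ U := by
  refine (condEntropy_le_condEntropy_comp hU hV fun _ => ()).trans_eq ?_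
  simp [condEntropy, entropy, ENNReal.tsum_prod', preimage_pair_singleton, negMulLog]

lemma entropy_pair_le [IsProbabilityMeasure μ] [MeasurableSpace β] [MeasurableSingletonClass β]
    [Countable β] {U : Ω → α} {V : Ω → β} (hU : Measurable U) (hV : Measurable V) :
    entropy μ (fun ω => (U ω, V ω)) ≤ entropy μ U + entropy μ V := by
  rw [entropy_pair hU hV]
  exact add_le_add (condEntropy_le_entropy hU hV) le_rfl

lemma entropy_add_le [IsProbabilityMeasure μ] [Add α] {X Y : Ω → α} (hX : Measurable X)
    (hY : Measurable Y) : entropy μ (fun ω => X ω + Y ω) ≤ entropy μ X + entropy μ Y :=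
  (entropy_comp_le (μ := μ) (hX.prodMk hY) fun p => p.1 + p.2).trans (entropy_pair_le hX hY)

lemma entropy_finset_sum_ne_top [IsProbabilityMeasure μ] [AddCommMonoid α] {ι : Type*}
    {X : ι → Ω → α} (hX : ∀ i, Measurable (X i)) (s : Finset ι)
    (hfin : ∀ i ∈ s, entropy μ (X i) ≠ ⊤) : entropy μ (fun ω => ∑ i ∈ s, X i ω) ≠ ⊤ := by
  classical
  have : MeasurableAdd₂ α := ⟨measurable_of_countable _⟩
  induction s using Finset.induction_on with
  | empty => simp [entropy_const (μ := μ)]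
  | insert i s hi ih =>
    simp_rw [Finset.sum_insert hi]
    refine ne_top_of_le_ne_top ?_
      (entropy_add_le (hX i) (Finset.measurable_sum s fun i _ => hX i))
    exact ENNReal.add_ne_top.mpr
      ⟨hfin i (Finset.mem_insert_self i s), ih fun j hj => hfin j (Finset.mem_insert_of_mem hj)⟩

lemma condEntropy_pair_of_indepFun [IsProbabilityMeasure μ] [MeasurableSpace β]
    [MeasurableSingletonClass β] [MeasurableSpace γ] [MeasurableSingletonClass γ]
    {U : Ω → β} {V : Ω → γ} {S : Ω → α} (hS : Measurable S)
    (h : IndepFun (fun ω => (U ω, V ω)) S μ) :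
    condEntropy μ U (fun ω => (V ω, S ω)) = condEntropy μ U V := by
  have hVS : IndepFun V S μ := h.comp measurable_snd measurable_id
  have hUVS : ∀ u v s, μ.real ((fun ω => (U ω, V ω, S ω)) ⁻¹' {(u, v, s)})
      = μ.real ((fun ω => (U ω, V ω)) ⁻¹' {(u, v)}) * μ.real (S ⁻¹' {s}) := fun u v s => by
    rw [← measureReal_preimage_pair_of_indepFun h]
    congr 1
    ext
    simp [and_assoc]
  rw [condEntropy, condEntropy, ENNReal.tsum_prod', ENNReal.tsum_prod']
  refine tsum_congr fun u => ?_
  rw [ENNReal.tsum_prod']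
  refine tsum_congr fun v => ?_
  simp_rw [hUVS, measureReal_preimage_pair_of_indepFun hVS, mul_mul_log_div_mul_mul,
    ofReal_measureReal_mul]
  rw [ENNReal.tsum_mul_right, tsum_measure_preimage_singleton_eq_univ hS, measure_univ, one_mul]

lemma condEntropy_le_condEntropy_add_of_indepFun [IsProbabilityMeasure μ] [Add α]
    [MeasurableSpace β] [MeasurableSingletonClass β] {U : Ω → β} {V S : Ω → α}
    (hU : Measurable U) (hV : Measurable V) (hS : Measurable S)
    (h : IndepFun (fun ω => (U ω, V ω)) S μ) :
    condEntropy μ U V ≤ condEntropy μ U (fun ω => V ω + S ω) :=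
  calc condEntropy μ U V = condEntropy μ U (fun ω => (V ω, S ω)) :=
        (condEntropy_pair_of_indepFun hS h).symm
    _ ≤ _ := condEntropy_le_condEntropy_comp hU (hV.prodMk hS) fun p => p.1 + p.2

lemma condEntropy_le_condEntropy_sum_range [IsProbabilityMeasure μ] [AddCommMonoid α]
    {f : ℕ → Ω → α} (h : iIndepFun f μ) (hf : ∀ i, Measurable (f i)) {j m n : ℕ} (hjm : j < m)
    (hmn : m ≤ n) :
    condEntropy μ (f j) (fun ω => ∑ i ∈ Finset.range m, f i ω)
      ≤ condEntropy μ (f j) (fun ω => ∑ i ∈ Finset.range n, f i ω) := by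
  have : MeasurableAdd₂ α := ⟨measurable_of_countable _⟩
  have hdisj : Disjoint (Finset.range m) (Finset.Ico m n) := by
    rw [Finset.range_eq_Ico]; exact Finset.Ico_disjoint_Ico_consecutive 0 m n
  simp_rw [← Finset.sum_range_add_sum_Ico _ hmn]
  exact condEntropy_le_condEntropy_add_of_indepFun (hf j)
    (Finset.measurable_sum _ fun i _ => hf i) (Finset.measurable_sum _ fun i _ => hf i)
    (h.indepFun_prodMk_finset_sum hf hdisj (Finset.mem_range.mpr hjm))

lemma toReal_condEntropy [IsProbabilityMeasure μ] [MeasurableSpace β]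
    [MeasurableSingletonClass β] [Countable β] {U : Ω → β} {V : Ω → α} (hU : Measurable U)
    (hV : Measurable V) (hU' : entropy μ U ≠ ⊤) (hV' : entropy μ V ≠ ⊤) :
    (condEntropy μ U V).toReal = rvEntropy μ (fun ω => (U ω, V ω)) - rvEntropy μ V := by
  rw [← toReal_entropy, ← toReal_entropy, entropy_pair hU hV,
    ENNReal.toReal_add (ne_top_of_le_ne_top hU' (condEntropy_le_entropy hU hV)) hV',
    add_sub_cancel_right]

end Countable

end DiscreteEntropy

open DiscreteEntropy

/-- If `X₀, Z₁, Z₂, …` are independent random variables with values in a countable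
abelian group, the `Zₙ` (n ≥ 1) identically distributed, all with finite entropy, and
`Xₙ = X₀ + Z₁ + ⋯ + Zₙ`, then the conditional entropy
`H(Z₁ | Xₙ) = H(Z₁, Xₙ) - H(Xₙ)` is non-decreasing in `n` (for `n ≥ 1`). -/
theorem condEntropy_mono {Ω Γ : Type*} [MeasurableSpace Ω] [MeasurableSpace Γ]
    [MeasurableSingletonClass Γ] [Countable Γ] [AddCommGroup Γ]
    (μ : Measure Ω) [IsProbabilityMeasure μ]
    (X0 : Ω → Γ) (Z : ℕ → Ω → Γ)
    (hX0 : Measurable X0) (hZ : ∀ n, Measurable (Z n))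
    (hindep : iIndepFun
      (fun n => if n = 0 then X0 else Z n) μ)
    (hid : ∀ i j : ℕ, 1 ≤ i → 1 ≤ j → μ.map (Z i) = μ.map (Z j))
    (hfin0 : Summable fun g : Γ => Real.negMulLog (μ (X0 ⁻¹' {g})).toReal)
    (hfinZ : Summable fun g : Γ => Real.negMulLog (μ (Z 1 ⁻¹' {g})).toReal)
    (X : ℕ → Ω → Γ)
    (hX : ∀ n ω, X n ω = X0 ω + ∑ i ∈ Finset.Icc 1 n, Z i ω) :
    ∀ m n : ℕ, 1 ≤ m → m ≤ n →
      rvEntropy μ (fun ω => (Z 1 ω, X m ω)) - rvEntropy μ (X m) ≤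
      rvEntropy μ (fun ω => (Z 1 ω, X n ω)) - rvEntropy μ (X n) := by
  intro m n hm hmn
  set F : ℕ → Ω → Γ := fun i => if i = 0 then X0 else Z i
  have : MeasurableAdd₂ Γ := ⟨measurable_of_countable _⟩
  have hF : ∀ i, Measurable (F i) := fun i => by by_cases hi : i = 0 <;> simp [F, hi, hX0, hZ]
  have hFfin : ∀ i, entropy μ (F i) ≠ ⊤ := by
    intro i
    rcases eq_or_ne i 0 with rfl | hi
    · exact entropy_ne_top_of_summable hfin0
    · simp only [F, if_neg hi]
      rw [entropy_eq_of_map_eq (hZ i) (hZ 1) (hid i 1 (by omega) le_rfl)]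
      exact entropy_ne_top_of_summable hfinZ
  have hXF : ∀ k, X k = fun ω => ∑ i ∈ Finset.range (k + 1), F i ω := fun k => funext fun ω => by
    rw [hX, ← Finset.sum_apply, ← Pi.add_apply, add_sum_Icc_eq_sum_range, Finset.sum_apply]
  have hXmeas : ∀ k, Measurable (X k) := fun k => hXF k ▸ Finset.measurable_sum _ fun i _ => hF i
  have hXfin : ∀ k, entropy μ (X k) ≠ ⊤ := fun k =>
    hXF k ▸ entropy_finset_sum_ne_top hF _ fun i _ => hFfin i
  have key : condEntropy μ (Z 1) (X m) ≤ condEntropy μ (Z 1) (X n) := by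
    rw [hXF, hXF]
    exact condEntropy_le_condEntropy_sum_range (j := 1) hindep hF (by omega) (by omega)
  rw [← toReal_condEntropy (hZ 1) (hXmeas m) (hFfin 1) (hXfin m),
    ← toReal_condEntropy (hZ 1) (hXmeas n) (hFfin 1) (hXfin n)]
  exact ENNReal.toReal_mono
    (ne_top_of_le_ne_top (hFfin 1) (condEntropy_le_entropy (hZ 1) (hXmeas n))) key
end

section
/- For any probability measure μ on ℝ, any x₀ ∈ ℝ, and any m ∈ ℕ, the translated measure ν(A) = μ(A + x₀) satisfies |H(μ, 𝒟_m) - H(ν, 𝒟_m)| ≤ C for a universal constant C (independent of μ, x₀, m). -/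
open MeasureTheory ENNReal

/-!
Write `x₀ = n 2^{-m} + s` with `0 ≤ s < 2^{-m}`. The translated dyadic partition interleaves with
the original one: each cell of either is the union of the tail of one cell of the other and the
head of the next. Both are therefore coarsenings of a common refinement in which every cell splits
into at most two pieces, and for such a splitting, with `η(a) = -a log a` and `h` the binary
entropy, `η(a) + η(b) - η(a + b) = (a + b) h(a / (a + b)) ∈ [0, (a + b) log 2]`.
Passing to the common refinement and back thus costs at most `log 2`, in either direction.
-/

/-- Entropy of a measure on `ℝ` with respect to the dyadic partition
`𝒟_m = {[k 2^{-m}, (k+1) 2^{-m})}`. -/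
noncomputable def dyadEntropy (μ : Measure ℝ) (m : ℕ) : ℝ≥0∞ :=
  ∑' k : ℤ, ENNReal.ofReal (Real.negMulLog
    (μ (Set.Ico ((k : ℝ) * 2 ^ (-(m : ℤ))) (((k : ℝ) + 1) * 2 ^ (-(m : ℤ))))).toReal)

namespace Real

lemma negMulLog_add_negMulLog_eq {a b : ℝ} (hab : a + b ≠ 0) :
    negMulLog a + negMulLog b = negMulLog (a + b) + (a + b) * binEntropy (a / (a + b)) := by
  set p := a / (a + b)
  have ha : negMulLog a = negMulLog ((a + b) * p) := by rw [mul_div_cancel₀ _ hab]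
  have hb : negMulLog b = negMulLog ((a + b) * (1 - p)) := by
    rw [mul_one_sub, mul_div_cancel₀ _ hab]
    ring_nf
  rw [ha, hb, negMulLog_mul, negMulLog_mul, binEntropy_eq_negMulLog_add_negMulLog_one_sub]
  ring

lemma negMulLog_add_le {a b : ℝ} (ha : 0 ≤ a) (hb : 0 ≤ b) :
    negMulLog (a + b) ≤ negMulLog a + negMulLog b := by
  rcases (add_nonneg ha hb).eq_or_lt with hab | hab
  · simp [(add_eq_zero_iff_of_nonneg ha hb).1 hab.symm]
  rw [negMulLog_add_negMulLog_eq hab.ne']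
  have := binEntropy_nonneg (div_nonneg ha hab.le) (div_le_one_of_le₀ (by linarith) hab.le)
  nlinarith

lemma negMulLog_add_negMulLog_le {a b : ℝ} (ha : 0 ≤ a) (hb : 0 ≤ b) :
    negMulLog a + negMulLog b ≤ negMulLog (a + b) + (a + b) * log 2 := by
  rcases (add_nonneg ha hb).eq_or_lt with hab | hab
  · simp [(add_eq_zero_iff_of_nonneg ha hb).1 hab.symm]
  rw [negMulLog_add_negMulLog_eq hab.ne']
  gcongr
  exact binEntropy_le_log_two

end Real

noncomputable def entropyTerm (x : ℝ≥0∞) : ℝ≥0∞ := ENNReal.ofReal (Real.negMulLog x.toReal)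

lemma entropyTerm_add_le {x y : ℝ≥0∞} (hx : x ≠ ∞) (hy : y ≠ ∞) :
    entropyTerm (x + y) ≤ entropyTerm x + entropyTerm y := by
  rw [entropyTerm, toReal_add hx hy]
  exact (ofReal_le_ofReal (Real.negMulLog_add_le toReal_nonneg toReal_nonneg)).trans ofReal_add_le

lemma entropyTerm_add_entropyTerm_le {x y : ℝ≥0∞} (hx : x ≤ 1) (hy : y ≤ 1) :
    entropyTerm x + entropyTerm y ≤
      entropyTerm (x + y) + (x + y) * ENNReal.ofReal (Real.log 2) := by
  have hx' := ne_top_of_le_ne_top one_ne_top hx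
  have hy' := ne_top_of_le_ne_top one_ne_top hy
  have hx1 : x.toReal ≤ 1 := toReal_le_of_le_ofReal zero_le_one (by simpa using hx)
  have hy1 : y.toReal ≤ 1 := toReal_le_of_le_ofReal zero_le_one (by simpa using hy)
  have hxy : (x + y) * ENNReal.ofReal (Real.log 2) =
      ENNReal.ofReal ((x + y).toReal * Real.log 2) := by
    rw [ofReal_mul toReal_nonneg, ofReal_toReal (add_ne_top.2 ⟨hx', hy'⟩)]
  rw [entropyTerm, entropyTerm, entropyTerm, hxy,
    ← ofReal_add (Real.negMulLog_nonneg toReal_nonneg hx1)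
      (Real.negMulLog_nonneg toReal_nonneg hy1)]
  refine (ofReal_le_ofReal ?_).trans ofReal_add_le
  rw [toReal_add hx' hy']
  exact Real.negMulLog_add_negMulLog_le toReal_nonneg toReal_nonneg

noncomputable def icoEntropy (μ : Measure ℝ) (p : ℤ → ℝ) : ℝ≥0∞ :=
  ∑' k, entropyTerm (μ (Set.Ico (p k) (p (k + 1))))

lemma icoEntropy_comp_add_right (μ : Measure ℝ) (p : ℤ → ℝ) (n : ℤ) :
    icoEntropy μ (fun k => p (k + n)) = icoEntropy μ p := by
  rw [icoEntropy, icoEntropy,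
    ← (Equiv.addRight n).tsum_eq fun k => entropyTerm (μ (Set.Ico (p k) (p (k + 1))))]
  simp only [Equiv.coe_addRight, add_right_comm _ n 1]

lemma tsum_measure_Ico_le_one (μ : Measure ℝ) [IsProbabilityMeasure μ] {p : ℤ → ℝ}
    (hp : Monotone p) : ∑' k, μ (Set.Ico (p k) (p (k + 1))) ≤ 1 := by
  rw [← measure_iUnion ?_ fun _ => measurableSet_Ico]
  · exact prob_le_one
  simpa [Order.succ_eq_add_one] using hp.pairwise_disjoint_on_Ico_succ

theorem icoEntropy_le_of_interleave (μ : Measure ℝ) [IsProbabilityMeasure μ] {p q : ℤ → ℝ}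
    (hpq : ∀ k, p k ≤ q k) (hqp : ∀ k, q k ≤ p (k + 1)) :
    icoEntropy μ q ≤ icoEntropy μ p + ENNReal.ofReal (Real.log 2) := by
  set A := fun k => μ (Set.Ico (q k) (p (k + 1)))
  set B := fun k => μ (Set.Ico (p k) (q k))
  have hp : ∀ k, μ (Set.Ico (p k) (p (k + 1))) = B k + A k := fun k => by
    rw [← measure_union Set.Ico_disjoint_Ico_same measurableSet_Ico,
      Set.Ico_union_Ico_eq_Ico (hpq k) (hqp k)]
  have hq : ∀ k, μ (Set.Ico (q k) (q (k + 1))) = A k + B (k + 1) := fun k => by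
    rw [← measure_union Set.Ico_disjoint_Ico_same measurableSet_Ico,
      Set.Ico_union_Ico_eq_Ico (hqp k) (hpq (k + 1))]
  have hB : ∑' k, entropyTerm (B (k + 1)) = ∑' k, entropyTerm (B k) :=
    (Equiv.addRight 1).tsum_eq fun k => entropyTerm (B k)
  calc icoEntropy μ q = ∑' k, entropyTerm (A k + B (k + 1)) := by simp only [icoEntropy, hq]
    _ ≤ ∑' k, (entropyTerm (A k) + entropyTerm (B (k + 1))) :=
      ENNReal.tsum_le_tsum fun k => entropyTerm_add_le (measure_ne_top _ _) (measure_ne_top _ _)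
    _ = ∑' k, (entropyTerm (B k) + entropyTerm (A k)) := by
      rw [ENNReal.tsum_add, ENNReal.tsum_add, hB, add_comm]
    _ ≤ ∑' k, (entropyTerm (B k + A k) + (B k + A k) * ENNReal.ofReal (Real.log 2)) :=
      ENNReal.tsum_le_tsum fun k => entropyTerm_add_entropyTerm_le prob_le_one prob_le_one
    _ = icoEntropy μ p + (∑' k, μ (Set.Ico (p k) (p (k + 1)))) * ENNReal.ofReal (Real.log 2) := by
      simp only [icoEntropy, hp, ENNReal.tsum_add, ENNReal.tsum_mul_right]
    _ ≤ icoEntropy μ p + ENNReal.ofReal (Real.log 2) := by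
      grw [tsum_measure_Ico_le_one μ (monotone_int_of_le_succ fun k => (hpq k).trans (hqp k)),
        one_mul]

theorem icoEntropy_translate_le (μ : Measure ℝ) [IsProbabilityMeasure μ] {w : ℝ} (hw : 0 < w)
    (a b : ℝ) :
    icoEntropy μ (fun k => k * w + b) ≤ icoEntropy μ (fun k => k * w + a) +
      ENNReal.ofReal (Real.log 2) := by
  set n := ⌊(b - a) / w⌋
  have hn : n * w ≤ b - a := (le_div_iff₀ hw).1 (Int.floor_le _)
  have hn1 : b - a < (n + 1) * w := (div_lt_iff₀ hw).1 (Int.lt_floor_add_one _)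
  rw [← icoEntropy_comp_add_right μ (fun k => k * w + a) n]
  refine icoEntropy_le_of_interleave μ (fun k => ?_) (fun k => ?_) <;> push_cast <;> nlinarith

lemma dyadEntropy_map_sub (μ : Measure ℝ) (x₀ : ℝ) (m : ℕ) :
    dyadEntropy (μ.map fun x => x - x₀) m = icoEntropy μ (fun k => k * 2 ^ (-(m : ℤ)) + x₀) := by
  simp only [dyadEntropy, icoEntropy, entropyTerm,
    Measure.map_apply (measurable_sub_const x₀) measurableSet_Ico, Set.preimage_sub_const_Ico,
    Int.cast_add, Int.cast_one]

/-- Translation changes dyadic entropy by at most a universal constant: if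
`ν(A) = μ(A + x₀)`, i.e. `ν = (x ↦ x - x₀)_* μ`, then `|H(μ,𝒟_m) - H(ν,𝒟_m)| ≤ C`. -/
theorem dyadEntropy_translate :
    ∃ C : ℝ, 0 < C ∧ ∀ (μ : Measure ℝ), IsProbabilityMeasure μ → ∀ (x₀ : ℝ) (m : ℕ),
      dyadEntropy (μ.map fun x => x - x₀) m ≤ dyadEntropy μ m + ENNReal.ofReal C ∧
      dyadEntropy μ m ≤ dyadEntropy (μ.map fun x => x - x₀) m + ENNReal.ofReal C := by
  refine ⟨Real.log 2, Real.log_pos one_lt_two, fun μ _ x₀ m => ?_⟩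
  have hμ : dyadEntropy μ m = icoEntropy μ (fun k => k * 2 ^ (-(m : ℤ)) + 0) := by
    simpa using dyadEntropy_map_sub μ 0 m
  rw [hμ, dyadEntropy_map_sub]
  have hw : (0 : ℝ) < 2 ^ (-(m : ℤ)) := by positivity
  exact ⟨icoEntropy_translate_le μ hw _ _, icoEntropy_translate_le μ hw _ _⟩
end

section
/- Let k ∈ ℕ and let F be a k-times continuously differentiable function on a compact interval J ⊆ ℝ with ‖F‖_{J,k} := max_{0≤p≤k} max_{x∈J} |F^{(p)}(x)| ≤ M. Suppose 0 < c < 1 is such that for every x ∈ J there is p ∈ {0,…,k} with |F^{(p)}(x)| > c. Then for every 0 < ρ < c/2^k, the set F^{-1}((-ρ,ρ)) ∩ J can be covered by at most C/c² intervals, each of length at most 2(ρ/c)^{1/2^k}, where C depends only on k, M, and the length of J. -/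
/-!
Let `s = (ρ/c)^{1/2^k}`. If `s ≥ 1/2`, a grid of mesh `< 1` already does. Otherwise descend
through the level sets `Y_j = levelSet F a b c s δ k j`, with `δ = c / (2 (k + 1))`: `Y_0`
contains `{|F| < ρ}` and `Y_k = ∅` by transversality. Given a cover of `Y_{j+1}`, cut the rest
of `Y_j` at the left endpoints of the cover and at a grid of mesh `D = δ / M`. On a piece
`[x, y]` missing `Y_{j+1}` the lower derivatives drift by less than `δ`, so
`|F^{(j+1)}| ≥ c s^{2^{k-j-1}}` there, while `|F^{(j)}| < c s^{2^{k-j}}` at both ends; the mean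
value theorem gives `y - x ≤ 2s`. Each level at most doubles the number of intervals and adds
`O(1/c)` of them.
-/

open Set

theorem subset_Icc_csInf_add {B : Set ℝ} {d : ℝ} (hB : BddBelow B)
    (h : ∀ x ∈ B, ∀ y ∈ B, x ≤ y → y - x ≤ d) : B ⊆ Icc (sInf B) (sInf B + d) := by
  intro y hy
  refine ⟨csInf_le hB hy, ?_⟩
  suffices y - d ≤ sInf B by linarith
  refine le_csInf ⟨y, hy⟩ fun x hx => ?_
  rcases le_total x y with hxy | hyx
  · linarith [h x hx y hy hxy]
  · linarith [h y hy y hy le_rfl]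

/-- Points of `A` not separated by any cut point of `K` are grouped under the last cut point
before them; each group is then covered by a single interval. -/
theorem exists_cover_of_cuts {A : Set ℝ} {d : ℝ} (K : Finset ℝ) (hK : ∀ x ∈ A, ∃ p ∈ K, p ≤ x)
    (h : ∀ x ∈ A, ∀ y ∈ A, x ≤ y → (∀ p ∈ K, p ∉ Ioc x y) → y - x ≤ d) :
    ∃ V : Finset ℝ, V.card ≤ K.card ∧ A ⊆ ⋃ v ∈ V, Icc v (v + d) := by
  classical
  let group (p : ℝ) : Set ℝ := {x ∈ A | p ≤ x ∧ ∀ q ∈ K, q ∉ Ioc p x}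
  have group_subset (p : ℝ) : group p ⊆ Icc (sInf (group p)) (sInf (group p) + d) := by
    refine subset_Icc_csInf_add ⟨p, fun x hx => hx.2.1⟩ fun x hx y hy hxy => ?_
    refine h x hx.1 y hy.1 hxy fun q hq hqxy => hy.2.2 q hq ⟨?_, hqxy.2⟩
    linarith [hx.2.1, hqxy.1]
  refine ⟨K.image fun p => sInf (group p), Finset.card_image_le, fun x hx => ?_⟩
  obtain ⟨p₀, hp₀K, hp₀x⟩ := hK x hx
  obtain ⟨p, hp, hmax⟩ :=
    (K.filter (· ≤ x)).exists_max_image id ⟨p₀, Finset.mem_filter.2 ⟨hp₀K, hp₀x⟩⟩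
  have hpK := Finset.mem_filter.1 hp
  have hx_group : x ∈ group p := ⟨hx, hpK.2, fun q hq hqx =>
    not_lt.2 (hmax q (Finset.mem_filter.2 ⟨hq, hqx.2⟩)) hqx.1⟩
  exact mem_iUnion₂.2 ⟨_, Finset.mem_image_of_mem _ hpK.1, group_subset p hx_group⟩

theorem exists_grid_Icc {a b D : ℝ} (hab : a ≤ b) (hD : 0 < D) :
    ∃ K : Finset ℝ, a ∈ K ∧ (K.card : ℝ) ≤ (b - a) / D + 1 ∧
      ∀ x y, a ≤ y → y ≤ b → (∀ p ∈ K, p ∉ Ioc x y) → y - x < D := by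
  classical
  set N := ⌊(b - a) / D⌋₊
  refine ⟨(Finset.range (N + 1)).image fun i : ℕ => a + i * D, ?_, ?_, ?_⟩
  · exact Finset.mem_image.2 ⟨0, by simp, by simp⟩
  · calc (((Finset.range (N + 1)).image fun i : ℕ => a + i * D).card : ℝ)
        ≤ N + 1 := by exact_mod_cast Finset.card_image_le.trans (by simp)
      _ ≤ (b - a) / D + 1 := by
        gcongr; exact Nat.floor_le (div_nonneg (sub_nonneg.2 hab) hD.le)
  · intro x y hay hyb hK
    set i := ⌊(y - a) / D⌋₊
    have hy_nonneg : 0 ≤ (y - a) / D := div_nonneg (sub_nonneg.2 hay) hD.le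
    have hi_le : (i : ℝ) * D ≤ y - a := (le_div_iff₀ hD).1 (Nat.floor_le hy_nonneg)
    have hi_gt : y - a < (i + 1) * D := (div_lt_iff₀ hD).1 (Nat.lt_floor_add_one _)
    have hiN : i ≤ N := Nat.floor_le_floor (by gcongr)
    have hgrid : a + i * D ∉ Ioc x y :=
      hK _ (Finset.mem_image.2 ⟨i, Finset.mem_range.2 (Nat.lt_succ_of_le hiN), rfl⟩)
    have : a + i * D ≤ x := by
      by_contra hlt
      exact hgrid ⟨not_le.1 hlt, by linarith⟩
    nlinarith

/-- Cut `[a, b]` at the left endpoints of the intervals of `U` and at a grid of mesh `D`: two points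
of `B` in the same piece are closer than `D`, with no interval of `U` between them. -/
theorem exists_cover_of_gaps {a b D ℓ : ℝ} {B : Set ℝ} (hab : a ≤ b) (hD : 0 < D)
    (U : Finset ℝ) (hB : B ⊆ Icc a b) (hBU : Disjoint B (⋃ u ∈ U, Icc u (u + ℓ)))
    (h : ∀ x ∈ B, ∀ y ∈ B, x ≤ y → y - x < D →
      Disjoint (Icc x y) (⋃ u ∈ U, Icc u (u + ℓ)) → y - x ≤ ℓ) :
    ∃ V : Finset ℝ, (V.card : ℝ) ≤ U.card + ((b - a) / D + 1) ∧
      B ⊆ ⋃ v ∈ V, Icc v (v + ℓ) := by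
  classical
  obtain ⟨G, haG, hGcard, hG⟩ := exists_grid_Icc hab hD
  obtain ⟨V, hVcard, hV⟩ := exists_cover_of_cuts (d := ℓ) (A := B) (U ∪ G)
    (fun x hx => ⟨a, Finset.mem_union_right _ haG, (hB hx).1⟩) fun x hx y hy hxy hcut => by
      refine h x hx y hy hxy (hG x y (hB hy).1 (hB hy).2 fun p hp => hcut p
        (Finset.mem_union_right _ hp)) (disjoint_left.2 fun z hz hzU => ?_)
      obtain ⟨u, hu, hzu⟩ := mem_iUnion₂.1 hzU
      have hxu : x < u := by
        by_contra! hux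
        exact disjoint_left.1 hBU hx (mem_iUnion₂.2 ⟨u, hu, hux, hz.1.trans hzu.2⟩)
      exact hcut u (Finset.mem_union_left _ hu) ⟨hxu, hzu.1.trans hz.2⟩
  refine ⟨V, ?_, hV⟩
  calc (V.card : ℝ) ≤ (U ∪ G).card := by exact_mod_cast hVcard
    _ ≤ U.card + G.card := by exact_mod_cast Finset.card_union_le U G
    _ ≤ U.card + ((b - a) / D + 1) := by gcongr

theorem exists_cover_Icc {a b D ℓ : ℝ} (hab : a ≤ b) (hD : 0 < D) (hDℓ : D ≤ ℓ) :
    ∃ U : Finset ℝ, (U.card : ℝ) ≤ (b - a) / D + 1 ∧ Icc a b ⊆ ⋃ u ∈ U, Icc u (u + ℓ) := by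
  obtain ⟨U, hUcard, hU⟩ := exists_cover_of_gaps hab hD ∅ subset_rfl (by simp)
    fun x _ y _ _ hyx _ => by linarith
  exact ⟨U, by simpa using hUcard, hU⟩

theorem exists_cover_zero_of_cover_succ {Y : ℕ → Set ℝ} {ℓ q : ℝ} {k : ℕ} (htop : Y k = ∅)
    (hstep : ∀ j < k, ∀ U : Finset ℝ, Y (j + 1) ⊆ ⋃ u ∈ U, Icc u (u + ℓ) →
      ∃ V : Finset ℝ, (V.card : ℝ) ≤ 2 * U.card + q ∧ Y j ⊆ ⋃ v ∈ V, Icc v (v + ℓ)) :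
    ∃ U : Finset ℝ, (U.card : ℝ) ≤ (2 ^ k - 1) * q ∧ Y 0 ⊆ ⋃ u ∈ U, Icc u (u + ℓ) := by
  suffices ∀ m ≤ k, ∃ U : Finset ℝ, (U.card : ℝ) ≤ (2 ^ m - 1) * q ∧
      Y (k - m) ⊆ ⋃ u ∈ U, Icc u (u + ℓ) by
    simpa using this k le_rfl
  intro m
  induction m with
  | zero => exact fun _ => ⟨∅, by simp, by simp [htop]⟩
  | succ m ih =>
    intro hm
    obtain ⟨U, hUcard, hU⟩ := ih (by omega)
    obtain ⟨V, hVcard, hV⟩ := hstep (k - (m + 1)) (by omega) U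
      (by rwa [show k - (m + 1) + 1 = k - m by omega])
    refine ⟨V, ?_, hV⟩
    calc (V.card : ℝ) ≤ 2 * U.card + q := hVcard
      _ ≤ 2 * ((2 ^ m - 1) * q) + q := by gcongr
      _ = (2 ^ (m + 1) - 1) * q := by ring

theorem exists_iteratedDerivWithin_sub_eq {F : ℝ → ℝ} {a b x y : ℝ} {n i : ℕ}
    (hF : ContDiffOn ℝ n F (Icc a b)) (hi : i < n) (hax : a ≤ x) (hxy : x < y) (hyb : y ≤ b) :
    ∃ ζ ∈ Ioo x y, iteratedDerivWithin i F (Icc a b) y - iteratedDerivWithin i F (Icc a b) x =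
      iteratedDerivWithin (i + 1) F (Icc a b) ζ * (y - x) := by
  have hab : UniqueDiffOn ℝ (Icc a b) := uniqueDiffOn_Icc (by linarith)
  obtain ⟨ζ, hζ, hslope⟩ :=
    exists_hasDerivAt_eq_slope _ (iteratedDerivWithin (i + 1) F (Icc a b)) hxy
    ((hF.continuousOn_iteratedDerivWithin (by exact_mod_cast hi.le) hab).mono
      (Icc_subset_Icc hax hyb))
    fun z hz => by
      rw [iteratedDerivWithin_succ]
      have hz' : z ∈ Ioo a b := ⟨hax.trans_lt hz.1, hz.2.trans_le hyb⟩
      exact ((hF.differentiableOn_iteratedDerivWithin (by exact_mod_cast hi) hab) z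
        (Ioo_subset_Icc_self hz')).hasDerivWithinAt.hasDerivAt (Icc_mem_nhds hz'.1 hz'.2)
  exact ⟨ζ, hζ, by rw [hslope, div_mul_cancel₀ _ (sub_pos.2 hxy).ne']⟩

theorem abs_iteratedDerivWithin_sub_le {F : ℝ → ℝ} {a b x y M : ℝ} {n i : ℕ}
    (hF : ContDiffOn ℝ n F (Icc a b)) (hi : i < n)
    (hM : ∀ z ∈ Icc a b, |iteratedDerivWithin (i + 1) F (Icc a b) z| ≤ M)
    (hax : a ≤ x) (hxy : x ≤ y) (hyb : y ≤ b) :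
    |iteratedDerivWithin i F (Icc a b) y - iteratedDerivWithin i F (Icc a b) x| ≤
      M * (y - x) := by
  rcases hxy.eq_or_lt with rfl | hxy
  · simp
  obtain ⟨ζ, hζ, hsub⟩ := exists_iteratedDerivWithin_sub_eq hF hi hax hxy hyb
  rw [hsub, abs_mul, abs_of_pos (sub_pos.2 hxy)]
  gcongr
  exact hM ζ ⟨hax.trans hζ.1.le, hζ.2.le.trans hyb⟩

def levelSet (F : ℝ → ℝ) (a b c s δ : ℝ) (k j : ℕ) : Set ℝ :=
  {x ∈ Icc a b | ∀ i ≤ j,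
    |iteratedDerivWithin i F (Icc a b) x| < c * s ^ 2 ^ (k - i) + ((j : ℝ) - i) * δ}

section levelSet

variable {F : ℝ → ℝ} {a b c s δ M : ℝ} {k : ℕ}

theorem subset_levelSet_zero :
    Icc a b ∩ F ⁻¹' Ioo (-(c * s ^ 2 ^ k)) (c * s ^ 2 ^ k) ⊆ levelSet F a b c s δ k 0 := by
  rintro x ⟨hx, hFx⟩
  refine ⟨hx, fun i hi => ?_⟩
  obtain rfl := Nat.le_zero.1 hi
  simpa [abs_lt] using hFx

theorem levelSet_top_eq_empty
    (htrans : ∀ x ∈ Icc a b, ∃ p ≤ k, c < |iteratedDerivWithin p F (Icc a b) x|)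
    (hc : 0 ≤ c) (hs₀ : 0 ≤ s) (hs : s ≤ 1 / 2) (hδ : 0 ≤ δ) (hkδ : 2 * k * δ ≤ c) :
    levelSet F a b c s δ k k = ∅ := by
  refine eq_empty_of_forall_notMem fun x ⟨hx, hsmall⟩ => ?_
  obtain ⟨p, hpk, hp⟩ := htrans x hx
  have hpow : s ^ 2 ^ (k - p) ≤ s := pow_le_of_le_one hs₀ (by linarith) (by positivity)
  have hkp : ((k : ℝ) - p) * δ ≤ k * δ := by
    gcongr; exact sub_le_self _ (Nat.cast_nonneg p)
  nlinarith [hsmall p hpk]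

theorem sub_le_of_mem_levelSet (hF : ContDiffOn ℝ k F (Icc a b))
    (hM : ∀ p ≤ k, ∀ x ∈ Icc a b, |iteratedDerivWithin p F (Icc a b) x| ≤ M)
    (hc : 0 < c) (hs₀ : 0 < s) (hs₁ : s ≤ 1) {D : ℝ} (hMD : M * D ≤ δ) {j : ℕ} (hj : j < k)
    {x y : ℝ} (hx : x ∈ levelSet F a b c s δ k j) (hy : y ∈ levelSet F a b c s δ k j)
    (hxy : x ≤ y) (hyx : y - x < D) (hgap : Disjoint (Icc x y) (levelSet F a b c s δ k (j + 1))) :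
    y - x ≤ 2 * s := by
  rcases hxy.eq_or_lt with rfl | hxy
  · linarith
  have hM₀ : 0 ≤ M := (abs_nonneg _).trans (hM 0 (Nat.zero_le k) x hx.1)
  -- on `[x, y]` the derivatives of order `≤ j` stay below the thresholds of level `j + 1`,
  -- so `[x, y]` can only avoid that level where `F^{(j+1)}` is large
  have hlarge : ∀ z ∈ Icc x y,
      c * s ^ 2 ^ (k - (j + 1)) ≤ |iteratedDerivWithin (j + 1) F (Icc a b) z| := by
    intro z hz
    by_contra! hsmall
    have hz_ab : z ∈ Icc a b := ⟨hx.1.1.trans hz.1, hz.2.trans hy.1.2⟩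
    refine disjoint_left.1 hgap hz ⟨hz_ab, fun i hi => ?_⟩
    rcases hi.lt_or_eq with hi | rfl
    · have hij : i ≤ j := Nat.lt_succ_iff.1 hi
      have hlip := abs_iteratedDerivWithin_sub_le hF (by omega)
        (hM (i + 1) (by omega)) hx.1.1 hz.1 hz_ab.2
      have hMz : M * (z - x) ≤ M * D := by gcongr; linarith [hz.2]
      have htri := abs_sub_abs_le_abs_sub (iteratedDerivWithin i F (Icc a b) z)
        (iteratedDerivWithin i F (Icc a b) x)
      have hstep : ((j + 1 : ℕ) : ℝ) - i = ((j : ℝ) - i) + 1 := by push_cast; ring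
      rw [hstep]
      linarith [hx.2 i hij]
    · simpa using hsmall
  obtain ⟨ζ, hζ, hsub⟩ := exists_iteratedDerivWithin_sub_eq hF hj hx.1.1 hxy hy.1.2
  set w := s ^ 2 ^ (k - (j + 1))
  have hw : s ^ 2 ^ (k - j) = w ^ 2 := by
    rw [← pow_mul, ← pow_succ, show k - (j + 1) + 1 = k - j by omega]
  have hws : w ≤ s := pow_le_of_le_one hs₀.le hs₁ (by positivity)
  have hw₀ : 0 < w := by positivity
  have hGx := hx.2 j le_rfl
  have hGy := hy.2 j le_rfl
  simp only [sub_self, zero_mul, add_zero, hw] at hGx hGy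
  have hgrowth : c * w * (y - x) ≤
      |iteratedDerivWithin j F (Icc a b) y - iteratedDerivWithin j F (Icc a b) x| := by
    rw [hsub, abs_mul, abs_of_pos (sub_pos.2 hxy)]
    gcongr
    exact hlarge ζ ⟨hζ.1.le, hζ.2.le⟩
  have hΔ : c * w * (y - x) < c * w * (2 * s) := calc
    c * w * (y - x) ≤
        |iteratedDerivWithin j F (Icc a b) y - iteratedDerivWithin j F (Icc a b) x| := hgrowth
    _ ≤ |iteratedDerivWithin j F (Icc a b) y| + |iteratedDerivWithin j F (Icc a b) x| :=
        abs_sub _ _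
    _ < c * w ^ 2 + c * w ^ 2 := add_lt_add hGy hGx
    _ ≤ c * w * (2 * s) := by nlinarith [mul_pos hc hw₀]
  exact (lt_of_mul_lt_mul_left hΔ (by positivity)).le

theorem exists_cover_levelSet_of_cover_succ (hF : ContDiffOn ℝ k F (Icc a b))
    (hM : ∀ p ≤ k, ∀ x ∈ Icc a b, |iteratedDerivWithin p F (Icc a b) x| ≤ M)
    (hab : a ≤ b) (hc : 0 < c) (hs₀ : 0 < s) (hs₁ : s ≤ 1) {D : ℝ} (hD : 0 < D)
    (hMD : M * D ≤ δ) {j : ℕ} (hj : j < k) (U : Finset ℝ)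
    (hU : levelSet F a b c s δ k (j + 1) ⊆ ⋃ u ∈ U, Icc u (u + 2 * s)) :
    ∃ V : Finset ℝ, (V.card : ℝ) ≤ 2 * U.card + ((b - a) / D + 1) ∧
      levelSet F a b c s δ k j ⊆ ⋃ v ∈ V, Icc v (v + 2 * s) := by
  classical
  obtain ⟨V, hVcard, hV⟩ := exists_cover_of_gaps hab hD U
    (B := levelSet F a b c s δ k j \ ⋃ u ∈ U, Icc u (u + 2 * s))
    (fun x hx => hx.1.1) disjoint_sdiff_left fun x hx y hy hxy hyx hgap =>
      sub_le_of_mem_levelSet hF hM hc hs₀ hs₁ hMD hj hx.1 hy.1 hxy hyx (hgap.mono_right hU)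
  refine ⟨U ∪ V, ?_, fun x hx => ?_⟩
  · calc ((U ∪ V).card : ℝ) ≤ U.card + V.card := by exact_mod_cast Finset.card_union_le U V
      _ ≤ 2 * U.card + ((b - a) / D + 1) := by linarith
  · rw [Finset.set_biUnion_union]
    by_cases hxU : x ∈ ⋃ u ∈ U, Icc u (u + 2 * s)
    · exact Or.inl hxU
    · exact Or.inr (hV ⟨hx, hxU⟩)

theorem exists_cover_sublevel_of_le_half (hF : ContDiffOn ℝ k F (Icc a b))
    (hM : ∀ p ≤ k, ∀ x ∈ Icc a b, |iteratedDerivWithin p F (Icc a b) x| ≤ M)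
    (htrans : ∀ x ∈ Icc a b, ∃ p ≤ k, c < |iteratedDerivWithin p F (Icc a b) x|)
    (hab : a ≤ b) (hc : 0 < c) (hs₀ : 0 < s) (hs : s ≤ 1 / 2) {D : ℝ} (hD : 0 < D)
    (hkD : 2 * k * (M * D) ≤ c) :
    ∃ U : Finset ℝ, (U.card : ℝ) ≤ (2 ^ k - 1) * ((b - a) / D + 1) ∧
      Icc a b ∩ F ⁻¹' Ioo (-(c * s ^ 2 ^ k)) (c * s ^ 2 ^ k) ⊆ ⋃ u ∈ U, Icc u (u + 2 * s) := by
  have hM₀ : 0 ≤ M := (abs_nonneg _).trans (hM 0 (Nat.zero_le k) a ⟨le_rfl, hab⟩)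
  obtain ⟨U, hUcard, hU⟩ := exists_cover_zero_of_cover_succ (Y := levelSet F a b c s (M * D) k)
    (levelSet_top_eq_empty htrans hc.le hs₀.le hs (by positivity) hkD)
    fun j hj U hU => exists_cover_levelSet_of_cover_succ hF hM hab hc hs₀ (by linarith) hD
      le_rfl hj U hU
  exact ⟨U, hUcard, subset_levelSet_zero.trans hU⟩

theorem exists_cover_sublevel (hF : ContDiffOn ℝ k F (Icc a b))
    (hM : ∀ p ≤ k, ∀ x ∈ Icc a b, |iteratedDerivWithin p F (Icc a b) x| ≤ M)
    (htrans : ∀ x ∈ Icc a b, ∃ p ≤ k, c < |iteratedDerivWithin p F (Icc a b) x|)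
    (hab : a ≤ b) (hc : 0 < c) (hs₀ : 0 < s) {D : ℝ} (hD : 0 < D) (hD₁ : D ≤ 1)
    (hkD : 2 * k * (M * D) ≤ c) :
    ∃ U : Finset ℝ, (U.card : ℝ) ≤ 2 ^ k * ((b - a) / D + 1) ∧
      Icc a b ∩ F ⁻¹' Ioo (-(c * s ^ 2 ^ k)) (c * s ^ 2 ^ k) ⊆ ⋃ u ∈ U, Icc u (u + 2 * s) := by
  have hq : 0 ≤ (b - a) / D + 1 := by have := sub_nonneg.2 hab; positivity
  have h2k : (1 : ℝ) ≤ 2 ^ k := one_le_pow₀ (by norm_num)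
  rcases le_or_gt (1 / 2) s with hs | hs
  · obtain ⟨U, hUcard, hU⟩ := exists_cover_Icc hab hD (ℓ := 2 * s) (by linarith)
    exact ⟨U, hUcard.trans (le_mul_of_one_le_left hq h2k), inter_subset_left.trans hU⟩
  · obtain ⟨U, hUcard, hU⟩ :=
      exists_cover_sublevel_of_le_half hF hM htrans hab hc hs₀ hs.le hD hkD
    exact ⟨U, hUcard.trans (by nlinarith), hU⟩

end levelSet

theorem rpow_one_div_two_pow_pow {x : ℝ} (hx : 0 ≤ x) (k : ℕ) :
    (x ^ (1 / 2 ^ k : ℝ)) ^ 2 ^ k = x := by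
  simpa [one_div] using Real.rpow_inv_natCast_pow hx (pow_ne_zero k two_ne_zero)

/-- Higher-order transversality lemma: if `F` is `C^k` on a compact interval `J = [a,b]`
with all derivatives up to order `k` bounded by `M`, and at every point of `J` some
derivative of order `≤ k` exceeds `c` in absolute value (`0 < c < 1`), then for every
`0 < ρ < c/2^k` the set `F⁻¹((-ρ,ρ)) ∩ J` can be covered by at most `C/c²` intervals,
each of length at most `2(ρ/c)^{1/2^k}`, with `C` depending only on `k`, `M`, `|J|`. -/
theorem transversality_covering (k : ℕ) (M L : ℝ) :
    ∃ C : ℝ, ∀ (F : ℝ → ℝ) (a b c ρ : ℝ), a ≤ b → b - a ≤ L →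
      ContDiffOn ℝ k F (Set.Icc a b) →
      (∀ p ≤ k, ∀ x ∈ Set.Icc a b, |iteratedDerivWithin p F (Set.Icc a b) x| ≤ M) →
      0 < c → c < 1 →
      (∀ x ∈ Set.Icc a b, ∃ p ≤ k, c < |iteratedDerivWithin p F (Set.Icc a b) x|) →
      0 < ρ → ρ < c / 2 ^ k →
      ∃ t : Finset (Set ℝ), (t.card : ℝ) ≤ C / c ^ 2 ∧
        (∀ s ∈ t, ∃ u v : ℝ, s = Set.Icc u v ∧
          v - u ≤ 2 * Real.rpow (ρ / c) (1 / 2 ^ k)) ∧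
        (Set.Icc a b ∩ F ⁻¹' Set.Ioo (-ρ) ρ) ⊆ ⋃ s ∈ t, s := by
  refine ⟨2 ^ k * (2 * (k + 1) * M * L + 1),
    fun F a b c ρ hab hbaL hF hM hc hc1 htrans hρ _ => ?_⟩
  obtain ⟨p, hpk, hp⟩ := htrans a ⟨le_rfl, hab⟩
  have hcM : c < M := hp.trans_le (hM p hpk a ⟨le_rfl, hab⟩)
  have hM₀ : 0 < M := hc.trans hcM
  set s := Real.rpow (ρ / c) (1 / 2 ^ k)
  have hρ_eq : c * s ^ 2 ^ k = ρ := by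
    simp only [s, Real.rpow_eq_pow]
    rw [rpow_one_div_two_pow_pow (by positivity)]
    field_simp
  set D := c / (2 * (k + 1) * M)
  obtain ⟨U, hUcard, hU⟩ := exists_cover_sublevel hF hM htrans hab hc
    (Real.rpow_pos_of_pos (div_pos hρ hc) _) (D := D) (by positivity)
    (by rw [div_le_one (by positivity)]; nlinarith) (by simp only [D]; field_simp; nlinarith)
  have hq : (b - a) / D + 1 ≤ (2 * (k + 1) * M * L + 1) / c ^ 2 := by
    have hbaD : (b - a) / D = 2 * (k + 1) * M * (b - a) / c := by simp only [D]; field_simp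
    have hX : 0 ≤ 2 * (k + 1) * M * (b - a) := by have := sub_nonneg.2 hab; positivity
    have hXY : 2 * (k + 1) * M * (b - a) ≤ 2 * (k + 1) * M * L := by gcongr
    rw [hbaD, div_add_one hc.ne', div_le_div_iff₀ hc (by positivity)]
    nlinarith [mul_le_mul_of_nonneg_left hc1.le hc.le]
  refine ⟨U.image fun u => Icc u (u + 2 * s), ?_, ?_, ?_⟩
  · calc ((U.image fun u => Icc u (u + 2 * s)).card : ℝ) ≤ U.card := by
          exact_mod_cast Finset.card_image_le
      _ ≤ 2 ^ k * ((2 * (k + 1) * M * L + 1) / c ^ 2) := hUcard.trans (by gcongr)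
      _ = 2 ^ k * (2 * (k + 1) * M * L + 1) / c ^ 2 := by ring
  · rintro t ht
    obtain ⟨u, -, rfl⟩ := Finset.mem_image.1 ht
    exact ⟨u, u + 2 * s, rfl, by simp [s]⟩
  · rw [Finset.set_biUnion_finset_image, ← hρ_eq]
    exact hU
end
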